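/- For z ∈ Ĩ_n, the number ℓ̂(z) := (ℓ(z) + ℓ'(z))/2 is a nonnegative integer, and ℓ̂(z) = ℓ(π) for every minimal-length element π of A_Hecke(z) = {π ∈ S̃_n : π^{-1} ∘ π = z}. -/

import Mathlib

open scoped TensorProduct

/-- Membership in the affine symmetric group `S̃_n`, viewed inside `Equiv.Perm ℤ`. -/
def IsAffine (n : ℕ) (π : Equiv.Perm ℤ) : Prop :=
  (∀ i : ℤ, π (i + n) = π i + n) ∧
  (∑ i ∈ Finset.Icc (1 : ℤ) (n : ℤ), π i) = ∑ i ∈ Finset.Icc (1 : ℤ) (n : ℤ), i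

/-- The underlying function of the affine reflection `t_{ij}`. -/
def affTFun (n : ℕ) (i j k : ℤ) : ℤ :=
  if (k - i) % (n : ℤ) = 0 then k - i + j
  else if (k - j) % (n : ℤ) = 0 then k - j + i
  else k

theorem affTFun_involutive {n : ℕ} {i j : ℤ} (h : ¬ (j - i) % (n : ℤ) = 0) :
    Function.Involutive (affTFun n i j) := by
  have key : ∀ a : ℤ, a % (n : ℤ) = 0 ↔ (n : ℤ) ∣ a :=
    fun a => (@Int.dvd_iff_emod_eq_zero (n : ℤ) a).symm
  rw [key] at h
  intro k
  by_cases h1 : (n : ℤ) ∣ (k - i)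
  · have h2 : ¬ (n : ℤ) ∣ (k - i + j - i) := by
      intro hd
      apply h
      have h5 : j - i = (k - i + j - i) - (k - i) := by ring
      rw [h5]
      exact dvd_sub hd h1
    have h3 : (n : ℤ) ∣ (k - i + j - j) := by
      have h5 : k - i + j - j = k - i := by ring
      rw [h5]; exact h1
    have e1 : affTFun n i j k = k - i + j := by simp [affTFun, key, h1]
    have e2 : affTFun n i j (k - i + j) = k := by
      simp only [affTFun, key]
      rw [if_neg h2, if_pos h3]
      ring
    rw [e1, e2]
  · by_cases h2 : (n : ℤ) ∣ (k - j)
    · have h3 : (n : ℤ) ∣ (k - j + i - i) := by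
        have h5 : k - j + i - i = k - j := by ring
        rw [h5]; exact h2
      have e1 : affTFun n i j k = k - j + i := by simp [affTFun, key, h1, h2]
      have e2 : affTFun n i j (k - j + i) = k := by
        simp only [affTFun, key]
        rw [if_pos h3]
        ring
      rw [e1, e2]
    · have e1 : affTFun n i j k = k := by simp [affTFun, key, h1, h2]
      rw [e1, e1]

/-- The affine reflection `t_{ij}` (interpreted as the identity when `i ≡ j (mod n)`). -/
noncomputable def affT (n : ℕ) (i j : ℤ) : Equiv.Perm ℤ :=
  if h : (j - i) % (n : ℤ) = 0 then 1
  else Function.Involutive.toPerm _ (affTFun_involutive h)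

/-- The simple reflection `s_i = t_{i,i+1}` of `S̃_n`. -/
noncomputable def affS (n : ℕ) (i : ℤ) : Equiv.Perm ℤ := affT n i (i + 1)

/-- Coxeter length: minimal length of a word in the simple reflections `s_1, …, s_n`. -/
noncomputable def wordLength (n : ℕ) (π : Equiv.Perm ℤ) : ℕ :=
  sInf {l : ℕ | ∃ w : List ℤ,
    (∀ x ∈ w, 1 ≤ x ∧ x ≤ (n : ℤ)) ∧ (w.map (affS n)).prod = π ∧ w.length = l}

/-- The set of inversions of `π`, up to the diagonal translation relation. -/
def InvPair (π : Equiv.Perm ℤ) : Type :=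
  {p : ℤ × ℤ // p.1 < p.2 ∧ π p.2 < π p.1}

/-- The number of equivalence classes of inversions of `π` under
`(a,b) ~ (a + mn, b + mn)`. -/
noncomputable def invLength (n : ℕ) (π : Equiv.Perm ℤ) : ℕ :=
  Nat.card (Quot fun p q : InvPair π =>
    ∃ m : ℤ, q.1.1 = p.1.1 + m * n ∧ q.1.2 = p.1.2 + m * n)

/-- Entry `c_i` of the code of an affine permutation. -/
noncomputable def codeEntry (π : Equiv.Perm ℤ) (i : ℤ) : ℕ :=
  Nat.card {j : ℤ // i < j ∧ π j < π i}

/-- Entry `ĉ_i` of the involution code of an affine involution. -/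
noncomputable def icodeEntry (z : Equiv.Perm ℤ) (i : ℤ) : ℕ :=
  Nat.card {j : ℤ // i < j ∧ z j < z i ∧ z j ≤ i}

/-- `ℓ'(z)`: `n` minus the number of orbits of `z` acting on `ℤ/nℤ`. -/
noncomputable def lprime (n : ℕ) (z : Equiv.Perm ℤ) : ℕ :=
  n - Nat.card (Quot fun a b : ZMod n => ((z (a.val : ℤ) : ℤ) : ZMod n) = b)

/-- The characterizing properties of the Demazure (0-Hecke) product on `S̃_n`:
closure, associativity, `s_i ∘ s_i = s_i`, and agreement with the group product
on length-additive factorizations. -/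
def IsDemazure (n : ℕ) (D : Equiv.Perm ℤ → Equiv.Perm ℤ → Equiv.Perm ℤ) : Prop :=
  (∀ a b, IsAffine n a → IsAffine n b → IsAffine n (D a b)) ∧
  (∀ a b c, IsAffine n a → IsAffine n b → IsAffine n c →
    D (D a b) c = D a (D b c)) ∧
  (∀ i : ℤ, D (affS n i) (affS n i) = affS n i) ∧
  (∀ a b, IsAffine n a → IsAffine n b →
    wordLength n (a * b) = wordLength n a + wordLength n b → D a b = a * b)

/-- The set of Hecke atoms `{π : π⁻¹ ∘ π = z}`. -/
def AHecke (n : ℕ) (D : Equiv.Perm ℤ → Equiv.Perm ℤ → Equiv.Perm ℤ)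
    (z : Equiv.Perm ℤ) : Set (Equiv.Perm ℤ) :=
  {π | IsAffine n π ∧ D π⁻¹ π = z}

/-- The set of atoms: minimal-length Hecke atoms. -/
def DemAtoms (n : ℕ) (D : Equiv.Perm ℤ → Equiv.Perm ℤ → Equiv.Perm ℤ)
    (z : Equiv.Perm ℤ) : Set (Equiv.Perm ℤ) :=
  {π | π ∈ AHecke n D z ∧ ∀ σ ∈ AHecke n D z, wordLength n π ≤ wordLength n σ}

/-- The Bruhat covering relation on `S̃_n`. -/
def BruhatCov (n : ℕ) (a b : Equiv.Perm ℤ) : Prop :=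
  (∃ i j : ℤ, i < j ∧ (j - i) % (n : ℤ) ≠ 0 ∧ b = a * affT n i j) ∧
  wordLength n b = wordLength n a + 1

/-- The Bruhat order on `S̃_n`. -/
def BruhatLE (n : ℕ) : Equiv.Perm ℤ → Equiv.Perm ℤ → Prop :=
  Relation.ReflTransGen (BruhatCov n)

/-- The covering relation of the Bruhat order restricted to involutions in `S̃_n`. -/
def BruhatCovI (n : ℕ) (y z : Equiv.Perm ℤ) : Prop :=
  IsAffine n y ∧ IsAffine n z ∧ y⁻¹ = y ∧ z⁻¹ = z ∧
  BruhatLE n y z ∧ y ≠ z ∧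
  ∀ w : Equiv.Perm ℤ, IsAffine n w → w⁻¹ = w →
    BruhatLE n y w → BruhatLE n w z → w = y ∨ w = z

/-- Strict dominance order on partitions (written as weakly decreasing functions). -/
def DomLT (p q : ℕ → ℕ) : Prop :=
  p ≠ q ∧ ∀ k : ℕ, ∑ i ∈ Finset.range k, p i ≤ ∑ i ∈ Finset.range k, q i

/-- The shape `λ(π)`: the transpose of the partition sorting the code of `π⁻¹`,
recorded as the weakly decreasing function `k ↦ λ(π)_{k+1}`. -/
noncomputable def affShape (n : ℕ) (π : Equiv.Perm ℤ) : ℕ → ℕ :=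
  fun k => Multiset.countP (fun x => k < x)
    ((Finset.Icc (1 : ℤ) (n : ℤ)).val.map (codeEntry π⁻¹))

/-- The shape `μ(z)`: the transpose of the partition sorting the involution code of `z`,
recorded as the weakly decreasing function `k ↦ μ(z)_{k+1}`. -/
noncomputable def invShape (n : ℕ) (z : Equiv.Perm ℤ) : ℕ → ℕ :=
  fun k => Multiset.countP (fun x => k < x)
    ((Finset.Icc (1 : ℤ) (n : ℤ)).val.map (icodeEntry z))

/-- The weakly decreasing rearrangement of a multiset of naturals, padded by zeros. -/
noncomputable def rearr (s : Multiset ℕ) : ℕ → ℕ :=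
  fun k => ((s.sort (· ≤ ·)).reverse).getD k 0

/-- Remove the entries of a list of integers that repeat an earlier residue mod `n`. -/
def dedupMod (n : ℕ) : List ℤ → List ℤ
  | [] => []
  | x :: xs => x :: dedupMod n (xs.filter fun y => (y - x) % (n : ℤ) ≠ 0)
termination_by l => l.length
decreasing_by
  simp only [List.length_cons]
  simp only [List.length_cons, List.length_unattach]
  exact Nat.lt_succ_of_le ((List.length_filter_le _ _).trans (le_of_eq List.length_attach))

/-- The window `[[z(a₁), a₁, z(a₂), a₂, …]]` of `α_min(z)⁻¹`, where `a₁ < a₂ < ⋯`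
are the elements `a ∈ [n]` with `a ≤ z(a)`. -/
noncomputable def aminWindow (n : ℕ) (z : Equiv.Perm ℤ) : List ℤ :=
  dedupMod n
    ((((Finset.Icc (1 : ℤ) (n : ℤ)).sort (· ≤ ·)).filter fun a => a ≤ z a).flatMap
      fun a => [z a, a])

/-- Cyclically decreasing elements of `S̃_n`. -/
def IsCycDec (n : ℕ) (π : Equiv.Perm ℤ) : Prop :=
  ∃ w : List ℤ,
    (∀ x ∈ w, 1 ≤ x ∧ x ≤ (n : ℤ)) ∧ (w.map (affS n)).prod = π ∧
    w.length = wordLength n π ∧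
    w.Pairwise fun a b => (a + 1 - b) % (n : ℤ) ≠ 0

/-- The coefficient of the monomial `∏ₖ xₖ₊₁^(α k)` in Lam's affine Stanley symmetric
function `F_π`: the number of length-additive factorizations of `π` into cyclically
decreasing factors of lengths prescribed by `α`. -/
noncomputable def stanleyCoeff (n : ℕ) (π : Equiv.Perm ℤ) (α : ℕ →₀ ℕ) : ℕ :=
  Nat.card {f : ℕ → Equiv.Perm ℤ //
    (∀ k, IsCycDec n (f k)) ∧ (∀ k, wordLength n (f k) = α k) ∧
    (∑ k ∈ α.support, α k) = wordLength n π ∧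
    ∃ N : ℕ, (∀ k, N ≤ k → f k = 1) ∧ ((List.range N).map f).prod = π}

/-- The set `Φ⁻_r(y)` of Bruhat covers of `y` of the form `τⁿ_{i r}(y)` with `i < r`
and `i ∉ {r, y(r)} + nℤ`. -/
def PhiMinus (n : ℕ) (τ : ℤ → ℤ → Equiv.Perm ℤ → Equiv.Perm ℤ)
    (y : Equiv.Perm ℤ) (r : ℤ) : Set (Equiv.Perm ℤ) :=
  {z | BruhatCovI n y z ∧ ∃ i : ℤ, i < r ∧ (i - r) % (n : ℤ) ≠ 0 ∧
    (i - y r) % (n : ℤ) ≠ 0 ∧ z = τ i r y}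

/-- The set `Φ⁺_r(y)` of Bruhat covers of `y` of the form `τⁿ_{r j}(y)` with `r < j`
and `j ∉ {r, y(r)} + nℤ`. -/
def PhiPlus (n : ℕ) (τ : ℤ → ℤ → Equiv.Perm ℤ → Equiv.Perm ℤ)
    (y : Equiv.Perm ℤ) (r : ℤ) : Set (Equiv.Perm ℤ) :=
  {z | BruhatCovI n y z ∧ ∃ j : ℤ, r < j ∧ (j - r) % (n : ℤ) ≠ 0 ∧
    (j - y r) % (n : ℤ) ≠ 0 ∧ z = τ r j y}

/-- The affine symmetric group as a subtype of `Equiv.Perm ℤ`. -/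
abbrev AffPerm (n : ℕ) := {π : Equiv.Perm ℤ // IsAffine n π}

/-- The coproduct `Δ(π) = Σ_{π ≐ π'π''} π' ⊗ π''` on `ℚ S̃_n`. -/
noncomputable def affComul (n : ℕ) :
    (AffPerm n →₀ ℚ) →ₗ[ℚ] TensorProduct ℚ (AffPerm n →₀ ℚ) (AffPerm n →₀ ℚ) :=
  Finsupp.lift _ ℚ _ fun π : AffPerm n =>
    ∑ᶠ p ∈ {p : AffPerm n × AffPerm n |
        p.1.val * p.2.val = π.val ∧
        wordLength n π.val = wordLength n p.1.val + wordLength n p.2.val},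
      (Finsupp.single p.1 (1 : ℚ)) ⊗ₜ[ℚ] (Finsupp.single p.2 (1 : ℚ))

/-!
Write `H(π) = π⁻¹ ∘ π` and `s = s_i`. If `πs < π` then `H(π) = s ∘ H(πs) ∘ s`, and for an affine
involution `y` the Demazure conjugate `s ∘ y ∘ s` is `y` when `ys < y`, `ys` when `ys = sy > y`,
and `sys` otherwise. Multiplying by `s` merges the fixed residues `i, i + 1` into one orbit, and
conjugating by `s` preserves the orbit count, so `ℓ + ℓ'` grows by `0`, `2` and `2` in these three
cases. Induction on `ℓ(π)` gives `ℓ(H π) + ℓ'(H π) ≤ 2 ℓ(π)` for every `π`. Conversely, every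
involution `z` with a descent `s` is the conjugate `s ∘ y ∘ s` of a shorter involution `y` (namely
`zs` or `szs`) with `ℓ + ℓ'` smaller by exactly `2`, which builds an atom attaining equality.

Lengths are computed from the code: `ℓ(π)` is the sum of the code entries over a window, and this
sum changes by exactly one under right multiplication by `s_i`.
-/
open Equiv

@[simp]
lemma Equiv.Perm.inv_apply_apply {α : Type*} (f : Perm α) (x : α) : f⁻¹ (f x) = x :=
  f.symm_apply_apply x

@[simp]
lemma Equiv.Perm.apply_inv_apply {α : Type*} (f : Perm α) (x : α) : f (f⁻¹ x) = x :=
  f.apply_symm_apply x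

lemma apply_ne_apply_add_one (π : Perm ℤ) (x : ℤ) : π x ≠ π (x + 1) := fun h => by
  simpa using π.injective h

section SimpleReflection

variable {n : ℕ}

lemma natCast_not_dvd_one (hn : 2 ≤ n) : ¬ (n : ℤ) ∣ 1 := fun h => by
  have := Int.le_of_dvd one_pos h
  omega

lemma add_one_sub_emod_ne_zero (hn : 2 ≤ n) (i : ℤ) : ¬ (i + 1 - i) % (n : ℤ) = 0 := by
  rw [← Int.dvd_iff_emod_eq_zero, add_sub_cancel_left]
  exact natCast_not_dvd_one hn

lemma coe_affS (hn : 2 ≤ n) (i : ℤ) : ⇑(affS n i) = affTFun n i (i + 1) := by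
  rw [affS, affT, dif_neg (add_one_sub_emod_ne_zero hn i)]
  rfl

@[simp]
lemma affS_mul_self (hn : 2 ≤ n) (i : ℤ) : affS n i * affS n i = 1 := by
  ext k
  simp only [Perm.mul_apply, coe_affS hn, Perm.one_apply]
  exact affTFun_involutive (add_one_sub_emod_ne_zero hn i) k

@[simp]
lemma affS_apply_apply (hn : 2 ≤ n) (i k : ℤ) : affS n i (affS n i k) = k := by
  rw [← Perm.mul_apply, affS_mul_self hn, Perm.one_apply]

@[simp]
lemma mul_affS_mul_affS (hn : 2 ≤ n) (a : Perm ℤ) (i : ℤ) : a * affS n i * affS n i = a := by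
  rw [mul_assoc, affS_mul_self hn, mul_one]

@[simp]
lemma affS_mul_affS_mul (hn : 2 ≤ n) (a : Perm ℤ) (i : ℤ) : affS n i * (affS n i * a) = a := by
  rw [← mul_assoc, affS_mul_self hn, one_mul]

lemma affS_inv (hn : 2 ≤ n) (i : ℤ) : (affS n i)⁻¹ = affS n i :=
  inv_eq_of_mul_eq_one_right (affS_mul_self hn i)

lemma affS_apply (hn : 2 ≤ n) (i k : ℤ) :
    affS n i k =
      if (n : ℤ) ∣ k - i then k + 1 else if (n : ℤ) ∣ k - (i + 1) then k - 1 else k := by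
  simp only [coe_affS hn, affTFun, ← Int.dvd_iff_emod_eq_zero]
  split_ifs <;> ring

variable {i k : ℤ}

lemma affS_apply_of_dvd (hn : 2 ≤ n) (h : (n : ℤ) ∣ k - i) : affS n i k = k + 1 := by
  rw [affS_apply hn, if_pos h]

lemma affS_apply_of_dvd_succ (hn : 2 ≤ n) (h : (n : ℤ) ∣ k - (i + 1)) :
    affS n i k = k - 1 := by
  have h' : ¬ (n : ℤ) ∣ k - i := fun h' => natCast_not_dvd_one hn (by
    simpa using dvd_sub h' h)
  rw [affS_apply hn, if_neg h', if_pos h]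

lemma affS_apply_of_not_dvd (hn : 2 ≤ n) (h₁ : ¬ (n : ℤ) ∣ k - i)
    (h₂ : ¬ (n : ℤ) ∣ k - (i + 1)) : affS n i k = k := by
  rw [affS_apply hn, if_neg h₁, if_neg h₂]

lemma affS_apply_self (hn : 2 ≤ n) (i : ℤ) : affS n i i = i + 1 :=
  affS_apply_of_dvd hn (by simp)

lemma affS_apply_succ (hn : 2 ≤ n) (i : ℤ) : affS n i (i + 1) = i :=
  (affS_apply_of_dvd_succ hn (by simp)).trans (add_sub_cancel_right i 1)

lemma dvd_of_affS_apply_eq_add_one (hn : 2 ≤ n) (h : affS n i k = k + 1) :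
    (n : ℤ) ∣ k - i := by
  rw [affS_apply hn] at h
  split_ifs at h with h₁ <;> first | exact h₁ | omega

lemma affS_apply_mem (hn : 2 ≤ n) (i k : ℤ) : affS n i k ∈ Finset.Icc (k - 1) (k + 1) := by
  rw [affS_apply hn, Finset.mem_Icc]
  split_ifs <;> omega

end SimpleReflection

section Periodic

variable {n : ℕ}

def ShiftEquivariant (n : ℕ) (a : Perm ℤ) : Prop := ∀ i : ℤ, a (i + n) = a i + n

lemma IsAffine.shiftEquivariant {a : Perm ℤ} (ha : IsAffine n a) : ShiftEquivariant n a := ha.1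

namespace ShiftEquivariant

variable {a b : Perm ℤ}

lemma apply_add_mul (ha : ShiftEquivariant n a) (k x : ℤ) : a (x + k * n) = a x + k * n := by
  induction k using Int.induction_on with
  | zero => simp
  | succ m ih => rw [add_mul, one_mul, ← add_assoc, ha, ih, add_assoc]
  | pred m ih =>
    have h := ha (x + (-(m : ℤ) - 1) * n)
    rw [add_assoc, ← add_one_mul, sub_add_cancel, ih] at h
    linarith

lemma apply_sub_self_eq (ha : ShiftEquivariant n a) {x y : ℤ} (h : (n : ℤ) ∣ x - y) :
    a x - x = a y - y := by
  obtain ⟨k, hk⟩ := h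
  rw [show x = y + k * n by linarith, ha.apply_add_mul]
  ring

lemma dvd_apply_sub_apply (ha : ShiftEquivariant n a) {x y : ℤ} (h : (n : ℤ) ∣ x - y) :
    (n : ℤ) ∣ a x - a y := by
  have := ha.apply_sub_self_eq h
  rwa [show a x - a y = x - y by linarith]

lemma inv (ha : ShiftEquivariant n a) : ShiftEquivariant n a⁻¹ := fun i =>
  a.injective (by rw [ha (a⁻¹ i)]; simp)

lemma mul (ha : ShiftEquivariant n a) (hb : ShiftEquivariant n b) :
    ShiftEquivariant n (a * b) := fun i => by
  simp only [Perm.mul_apply, hb i, ha (b i)]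

lemma dvd_apply_sub_apply_iff (ha : ShiftEquivariant n a) {x y : ℤ} :
    (n : ℤ) ∣ a x - a y ↔ (n : ℤ) ∣ x - y :=
  ⟨fun h => by simpa using ha.inv.dvd_apply_sub_apply h, ha.dvd_apply_sub_apply⟩

end ShiftEquivariant

lemma affS_shiftEquivariant (hn : 2 ≤ n) (i : ℤ) : ShiftEquivariant n (affS n i) := by
  intro k
  have h₁ : k + n - i = k - i + n := by ring
  have h₂ : k + n - (i + 1) = k - (i + 1) + n := by ring
  simp only [affS_apply hn, h₁, h₂, dvd_add_self_right]
  split_ifs <;> ring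

end Periodic

section Window

variable {n : ℕ}

def windowRep (n : ℕ) (x : ℤ) : ℤ := (x - 1) % (n : ℤ) + 1

lemma windowRep_mem (hn : 0 < n) (x : ℤ) : windowRep n x ∈ Finset.Icc (1 : ℤ) n := by
  have h₁ : 0 ≤ (x - 1) % (n : ℤ) := Int.emod_nonneg _ (by omega)
  have h₂ : (x - 1) % (n : ℤ) < n := Int.emod_lt_of_pos _ (by omega)
  simp only [windowRep, Finset.mem_Icc]
  omega

lemma dvd_windowRep_sub (x : ℤ) : (n : ℤ) ∣ windowRep n x - x := by
  have := Int.mul_ediv_add_emod (x - 1) n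
  exact ⟨-((x - 1) / n), by unfold windowRep; linarith⟩

lemma windowRep_eq_of_dvd {x y : ℤ} (h : (n : ℤ) ∣ x - y) : windowRep n x = windowRep n y := by
  have : (x - 1) % (n : ℤ) = (y - 1) % n :=
    Int.modEq_iff_dvd.mpr (by rw [show y - 1 - (x - 1) = -(x - y) by ring]; exact h.neg_right)
  rw [windowRep, this, windowRep]

lemma windowRep_eq_self {x : ℤ} (hx : x ∈ Finset.Icc (1 : ℤ) n) : windowRep n x = x := by
  rw [Finset.mem_Icc] at hx
  rw [windowRep, Int.emod_eq_of_lt (by omega) (by omega)]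
  ring

end Window

section AffineClosure

variable {n : ℕ} {a b : Perm ℤ}

lemma sum_window_apply_comp_sub (hn : 0 < n) (ha : ShiftEquivariant n a)
    (hb : ShiftEquivariant n b) :
    ∑ x ∈ Finset.Icc (1 : ℤ) n, (a (b x) - b x) = ∑ x ∈ Finset.Icc (1 : ℤ) n, (a x - x) := by
  refine Finset.sum_nbij' (fun x => windowRep n (b x)) (fun u => windowRep n (b⁻¹ u))
    (fun x _ => windowRep_mem hn _) (fun u _ => windowRep_mem hn _) ?_ ?_ ?_
  · intro x hx
    have h : (n : ℤ) ∣ b⁻¹ (windowRep n (b x)) - b⁻¹ (b x) :=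
      hb.inv.dvd_apply_sub_apply (dvd_windowRep_sub _)
    rw [Perm.inv_apply_apply] at h
    rw [windowRep_eq_of_dvd h, windowRep_eq_self hx]
  · intro u hu
    have h : (n : ℤ) ∣ b (windowRep n (b⁻¹ u)) - b (b⁻¹ u) :=
      hb.dvd_apply_sub_apply (dvd_windowRep_sub _)
    rw [Perm.apply_inv_apply] at h
    rw [windowRep_eq_of_dvd h, windowRep_eq_self hu]
  · intro x _
    exact (ha.apply_sub_self_eq (dvd_windowRep_sub _)).symm

lemma IsAffine.sum_window_sub_eq_zero (ha : IsAffine n a) :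
    ∑ x ∈ Finset.Icc (1 : ℤ) n, (a x - x) = 0 := by
  rw [Finset.sum_sub_distrib, ha.2, sub_self]

lemma isAffine_of_sum_window_sub_eq_zero (ha : ShiftEquivariant n a)
    (h : ∑ x ∈ Finset.Icc (1 : ℤ) n, (a x - x) = 0) : IsAffine n a :=
  ⟨ha, by rwa [Finset.sum_sub_distrib, sub_eq_zero] at h⟩

lemma IsAffine.one : IsAffine n 1 := ⟨fun _ => rfl, rfl⟩

lemma IsAffine.mul (hn : 0 < n) (ha : IsAffine n a) (hb : IsAffine n b) :
    IsAffine n (a * b) := by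
  refine isAffine_of_sum_window_sub_eq_zero (ha.shiftEquivariant.mul hb.shiftEquivariant) ?_
  calc ∑ x ∈ Finset.Icc (1 : ℤ) n, ((a * b) x - x)
      = ∑ x ∈ Finset.Icc (1 : ℤ) n, ((a (b x) - b x) + (b x - x)) := by simp
    _ = 0 := by
      rw [Finset.sum_add_distrib,
        sum_window_apply_comp_sub hn ha.shiftEquivariant hb.shiftEquivariant,
        ha.sum_window_sub_eq_zero, hb.sum_window_sub_eq_zero, add_zero]

lemma IsAffine.inv (hn : 0 < n) (ha : IsAffine n a) : IsAffine n a⁻¹ := by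
  refine isAffine_of_sum_window_sub_eq_zero ha.shiftEquivariant.inv ?_
  have h := sum_window_apply_comp_sub hn ha.shiftEquivariant.inv ha.shiftEquivariant
  simp only [Perm.inv_apply_apply] at h
  rw [← h, ← neg_eq_zero, ← Finset.sum_neg_distrib, ← ha.sum_window_sub_eq_zero]
  simp

lemma affS_isAffine (hn : 2 ≤ n) (i : ℤ) : IsAffine n (affS n i) := by
  refine isAffine_of_sum_window_sub_eq_zero (affS_shiftEquivariant hn i) ?_
  have hu : (n : ℤ) ∣ windowRep n i - i := dvd_windowRep_sub i
  have hv : (n : ℤ) ∣ windowRep n (i + 1) - (i + 1) := dvd_windowRep_sub (i + 1)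
  have huv : windowRep n i ≠ windowRep n (i + 1) := fun h =>
    natCast_not_dvd_one hn (by simpa [h] using dvd_sub hu hv)
  have hsub : {windowRep n i, windowRep n (i + 1)} ⊆ Finset.Icc (1 : ℤ) n := by
    simp [Finset.insert_subset_iff, windowRep_mem (show 0 < n by omega)]
  rw [← Finset.sum_subset hsub, Finset.sum_pair huv, affS_apply_of_dvd hn hu,
    affS_apply_of_dvd_succ hn hv]
  · ring
  · intro x hx hxuv
    have hxi : ¬ (n : ℤ) ∣ x - i := fun h => hxuv (by
      simp [← windowRep_eq_of_dvd h, windowRep_eq_self hx])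
    have hxi' : ¬ (n : ℤ) ∣ x - (i + 1) := fun h => hxuv (by
      simp [← windowRep_eq_of_dvd h, windowRep_eq_self hx])
    rw [affS_apply_of_not_dvd hn hxi hxi', sub_self]

end AffineClosure

section Code

variable {n : ℕ} {π : Perm ℤ} {i a j : ℤ}

lemma ShiftEquivariant.exists_sub_le_apply (hn : 0 < n) (hp : ShiftEquivariant n π) :
    ∃ C : ℤ, ∀ j, j - C ≤ π j := by
  refine ⟨∑ x ∈ Finset.Icc (1 : ℤ) n, |x - π x|, fun j => ?_⟩
  have h₁ := hp.apply_sub_self_eq (dvd_windowRep_sub (n := n) j)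
  have h₂ := Finset.single_le_sum (f := fun x => |x - π x|) (fun _ _ => abs_nonneg _)
    (windowRep_mem hn j)
  have h₃ := le_abs_self (windowRep n j - π (windowRep n j))
  linarith

lemma ShiftEquivariant.finite_setOf_lt_and_apply_lt (hn : 0 < n) (hp : ShiftEquivariant n π)
    (b c : ℤ) : {j : ℤ | b < j ∧ π j < c}.Finite := by
  obtain ⟨C, hC⟩ := hp.exists_sub_le_apply hn
  refine (Set.finite_Ioo b (c + C)).subset fun j ⟨h₁, h₂⟩ => ⟨h₁, ?_⟩
  linarith [hC j]

lemma ShiftEquivariant.codeEntry_add_mul (hp : ShiftEquivariant n π) (a k : ℤ) :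
    codeEntry π (a + k * n) = codeEntry π a :=
  Nat.card_congr <| (Equiv.subRight (k * n)).subtypeEquiv fun j => by
    have h := hp.apply_add_mul k (j - k * n)
    rw [sub_add_cancel] at h
    simp only [Equiv.subRight_apply, hp.apply_add_mul]
    constructor <;> rintro ⟨h₁, h₂⟩ <;> constructor <;> linarith

lemma ShiftEquivariant.codeEntry_eq_of_dvd (hp : ShiftEquivariant n π)
    (h : (n : ℤ) ∣ a - j) : codeEntry π a = codeEntry π j := by
  obtain ⟨k, hk⟩ := h
  rw [show a = j + k * n by linarith, hp.codeEntry_add_mul]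

lemma lt_affS_apply_iff (hn : 2 ≤ n) (ha : ¬ (n : ℤ) ∣ a - i) : a < affS n i j ↔ a < j := by
  rw [affS_apply hn]
  split_ifs with h₁ h₂
  · have : j ≠ a := by rintro rfl; exact ha h₁
    omega
  · have : j ≠ a + 1 := by rintro rfl; exact ha (by simpa using h₂)
    omega
  · rfl

lemma lt_affS_apply_iff_of_dvd (hn : 2 ≤ n) (ha : (n : ℤ) ∣ a - i) :
    a < affS n i j ↔ j = a ∨ a + 1 < j := by
  rw [affS_apply hn]
  split_ifs with h₁ h₂
  · have : j ≠ a + 1 := by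
      rintro rfl; exact natCast_not_dvd_one hn (by simpa using dvd_sub h₁ ha)
    omega
  · have : j ≠ a := by
      rintro rfl; exact natCast_not_dvd_one hn (by simpa using dvd_sub ha h₂)
    omega
  · have : j ≠ a := by rintro rfl; exact h₁ ha
    have : j ≠ a + 1 := by rintro rfl; exact h₂ (by simpa using ha)
    omega

lemma codeEntry_mul_affS (hn : 2 ≤ n) (π : Perm ℤ) (i a : ℤ) :
    codeEntry (π * affS n i) a = Nat.card {j // a < affS n i j ∧ π j < π (affS n i a)} :=
  Nat.card_congr <| (affS n i).subtypeEquiv fun j => by simp [affS_apply_apply hn]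

lemma codeEntry_mul_affS_of_not_dvd (hn : 2 ≤ n) (h₁ : ¬ (n : ℤ) ∣ a - i)
    (h₂ : ¬ (n : ℤ) ∣ a - (i + 1)) : codeEntry (π * affS n i) a = codeEntry π a := by
  rw [codeEntry_mul_affS hn, affS_apply_of_not_dvd hn h₁ h₂]
  exact Nat.card_congr (Equiv.subtypeEquivRight fun j => by rw [lt_affS_apply_iff hn h₁])

lemma codeEntry_mul_affS_of_dvd (hn : 2 ≤ n) (hp : ShiftEquivariant n π)
    (ha : (n : ℤ) ∣ a - i) (hlt : π a < π (a + 1)) :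
    codeEntry (π * affS n i) a = codeEntry π (a + 1) + 1 := by
  have hset : {j | a < affS n i j ∧ π j < π (a + 1)} =
      insert a {j | a + 1 < j ∧ π j < π (a + 1)} := by
    ext j
    simp only [Set.mem_ofPred_eq, Set.mem_insert_iff, lt_affS_apply_iff_of_dvd hn ha]
    by_cases hj : j = a
    · simp [hj, hlt]
    · simp [hj]
  rw [codeEntry_mul_affS hn, affS_apply_of_dvd hn ha, codeEntry]
  change Nat.card ({j | a < affS n i j ∧ π j < π (a + 1)} : Set ℤ) =
    Nat.card ({j | a + 1 < j ∧ π j < π (a + 1)} : Set ℤ) + 1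
  rw [hset, Nat.card_coe_set_eq, Nat.card_coe_set_eq, Set.ncard_insert_of_notMem (by simp)
    (hp.finite_setOf_lt_and_apply_lt (by omega) _ _)]

lemma codeEntry_mul_affS_of_dvd_succ (hn : 2 ≤ n) (ha : (n : ℤ) ∣ a - (i + 1))
    (hlt : π (a - 1) < π a) : codeEntry (π * affS n i) a = codeEntry π (a - 1) := by
  have ha' : ¬ (n : ℤ) ∣ a - i := fun h =>
    natCast_not_dvd_one hn (by simpa using dvd_sub h ha)
  rw [codeEntry_mul_affS hn, affS_apply_of_dvd_succ hn ha]
  refine Nat.card_congr (Equiv.subtypeEquivRight fun j => ?_)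
  rw [lt_affS_apply_iff hn ha']
  by_cases hj : j = a
  · subst hj
    constructor <;> rintro ⟨-, h⟩ <;> linarith
  · constructor <;> rintro ⟨h₁, h₂⟩ <;> exact ⟨by omega, h₂⟩

end Code

section LengthFormula

variable {n : ℕ} {π : Perm ℤ} {i : ℤ}

noncomputable def codeSum (n : ℕ) (π : Perm ℤ) : ℕ :=
  ∑ a ∈ Finset.Icc (1 : ℤ) n, codeEntry π a

lemma codeSum_mul_affS_of_lt (hn : 2 ≤ n) (hp : IsAffine n π)
    (hi : i ∈ Finset.Icc (1 : ℤ) n) (hlt : π i < π (i + 1)) :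
    codeSum n (π * affS n i) = codeSum n π + 1 := by
  have hp' := hp.shiftEquivariant
  set v := windowRep n (i + 1)
  have hv : (n : ℤ) ∣ v - (i + 1) := dvd_windowRep_sub _
  have hiv : i ≠ v := fun h => natCast_not_dvd_one hn (by simpa [← h] using hv.neg_right)
  have hpair : {i, v} ⊆ Finset.Icc (1 : ℤ) n := by
    simp [Finset.insert_subset_iff, hi, v, windowRep_mem (show 0 < n by omega)]
  have hrest : ∀ a ∈ Finset.Icc (1 : ℤ) n \ {i, v}, codeEntry (π * affS n i) a = codeEntry π a := by
    intro a ha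
    simp only [Finset.mem_sdiff, Finset.mem_insert, Finset.mem_singleton, not_or] at ha
    refine codeEntry_mul_affS_of_not_dvd hn (fun h => ha.2.1 ?_) (fun h => ha.2.2 ?_)
    · rw [← windowRep_eq_self ha.1, ← windowRep_eq_self hi, windowRep_eq_of_dvd h]
    · rw [← windowRep_eq_self ha.1, windowRep_eq_of_dvd h]
  have hvi : (n : ℤ) ∣ v - 1 - i := by rwa [sub_sub, add_comm 1 i]
  have hjump : π v - π (v - 1) = π (i + 1) - π i := by
    linarith [hp'.apply_sub_self_eq hv, hp'.apply_sub_self_eq hvi]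
  have hc_i := codeEntry_mul_affS_of_dvd (i := i) (a := i) hn hp' (by simp) hlt
  have hc_v := codeEntry_mul_affS_of_dvd_succ (π := π) hn hv (by linarith)
  rw [hp'.codeEntry_eq_of_dvd (a := i + 1) (j := v) (by simpa using hv.neg_right)] at hc_i
  rw [hp'.codeEntry_eq_of_dvd hvi] at hc_v
  rw [codeSum, codeSum, ← Finset.sum_sdiff hpair, ← Finset.sum_sdiff hpair (f := codeEntry π),
    Finset.sum_congr rfl hrest, Finset.sum_pair hiv, Finset.sum_pair hiv, hc_i, hc_v]
  ring

lemma codeSum_mul_affS_of_gt (hn : 2 ≤ n) (hp : IsAffine n π)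
    (hi : i ∈ Finset.Icc (1 : ℤ) n) (hgt : π (i + 1) < π i) :
    codeSum n (π * affS n i) + 1 = codeSum n π := by
  have h := codeSum_mul_affS_of_lt hn (hp.mul (by omega) (affS_isAffine hn i)) hi
    (by simpa [affS_apply_self hn, affS_apply_succ hn] using hgt)
  rwa [mul_affS_mul_affS hn, eq_comm] at h

lemma codeSum_one : codeSum n 1 = 0 :=
  Finset.sum_eq_zero fun a _ => by
    simp only [codeEntry, Perm.one_apply]
    have : IsEmpty {j // a < j ∧ j < a} := ⟨fun ⟨j, h₁, h₂⟩ => by omega⟩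
    exact Nat.card_of_isEmpty

lemma eq_one_of_forall_lt_apply_succ (hn : 0 < n) (hp : IsAffine n π)
    (h : ∀ i ∈ Finset.Icc (1 : ℤ) n, π i < π (i + 1)) : π = 1 := by
  have hlt : ∀ k : ℤ, π k < π (k + 1) := fun k => by
    have h₁ := hp.shiftEquivariant.apply_sub_self_eq (dvd_windowRep_sub (n := n) k)
    have h₂ := hp.shiftEquivariant.apply_sub_self_eq (show (n : ℤ) ∣ windowRep n k + 1 - (k + 1)
      by simpa using dvd_windowRep_sub (n := n) k)
    linarith [h _ (windowRep_mem hn k)]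
  have hmono : StrictMono π := strictMono_int_of_lt_succ hlt
  have hsucc : ∀ k : ℤ, π (k + 1) = π k + 1 := fun k => by
    obtain ⟨m, hm⟩ := π.surjective (π k + 1)
    have h₁ : k + 1 ≤ m := hmono.lt_iff_lt.mp (by omega)
    have := hmono.monotone h₁
    have := hlt k
    omega
  have htrans : ∀ k : ℤ, π k = k + π 0 := fun k => by
    induction k using Int.induction_on with
    | zero => simp
    | succ m ih => rw [hsucc, ih]; ring
    | pred m ih =>
      have := hsucc (-(m : ℤ) - 1)
      rw [sub_add_cancel] at this
      linarith
  have hzero : π 0 = 0 := by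
    have hsum := hp.sum_window_sub_eq_zero
    rw [Finset.sum_congr rfl fun x _ => by rw [htrans x, add_sub_cancel_left],
      Finset.sum_const, Int.card_Icc] at hsum
    simpa [hn.ne'] using hsum
  ext k
  simp [htrans k, hzero]

end LengthFormula

section WordLength

variable {n : ℕ} {π : Perm ℤ} {i : ℤ}

lemma exists_apply_succ_lt_of_ne_one (hn : 0 < n) (hp : IsAffine n π) (h : π ≠ 1) :
    ∃ i ∈ Finset.Icc (1 : ℤ) n, π (i + 1) < π i := by
  by_contra! hc
  exact h (eq_one_of_forall_lt_apply_succ hn hp fun i hi =>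
    (hc i hi).lt_of_ne (apply_ne_apply_add_one π i))

lemma isAffine_prod_map_affS (hn : 2 ≤ n) (w : List ℤ) : IsAffine n (w.map (affS n)).prod := by
  induction w with
  | nil => exact IsAffine.one
  | cons x w ih => simpa using (affS_isAffine hn x).mul (by omega) ih

lemma codeSum_prod_map_affS_le (hn : 2 ≤ n) {w : List ℤ}
    (hw : ∀ x ∈ w, 1 ≤ x ∧ x ≤ (n : ℤ)) : codeSum n (w.map (affS n)).prod ≤ w.length := by
  induction w using List.reverseRecOn with
  | nil => simp [codeSum_one]
  | append_singleton w x ih =>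
    have hx : x ∈ Finset.Icc (1 : ℤ) n := Finset.mem_Icc.mpr (hw x (by simp))
    have ih := ih fun y hy => hw y (by simp [hy])
    have hp := isAffine_prod_map_affS hn w
    simp only [List.map_append, List.map_singleton, List.prod_append, List.prod_singleton,
      List.length_append, List.length_singleton]
    rcases lt_or_gt_of_ne (apply_ne_apply_add_one (w.map (affS n)).prod x) with h | h
    · rw [codeSum_mul_affS_of_lt hn hp hx h]
      omega
    · have := codeSum_mul_affS_of_gt hn hp hx h
      omega

lemma exists_word_length_eq_codeSum (hn : 2 ≤ n) (hp : IsAffine n π) :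
    ∃ w : List ℤ, (∀ x ∈ w, 1 ≤ x ∧ x ≤ (n : ℤ)) ∧ (w.map (affS n)).prod = π ∧
      w.length = codeSum n π := by
  induction h : codeSum n π generalizing π with
  | zero =>
    refine ⟨[], by simp, ?_, rfl⟩
    by_contra hne
    obtain ⟨i, hi, hgt⟩ := exists_apply_succ_lt_of_ne_one (by omega) hp (Ne.symm hne)
    have := codeSum_mul_affS_of_gt hn hp hi hgt
    omega
  | succ N ih =>
    have hne : π ≠ 1 := by rintro rfl; simp [codeSum_one] at h
    obtain ⟨i, hi, hgt⟩ := exists_apply_succ_lt_of_ne_one (by omega) hp hne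
    have hN := codeSum_mul_affS_of_gt hn hp hi hgt
    obtain ⟨w, hw, hwπ, hlen⟩ :=
      ih (hp.mul (by omega) (affS_isAffine hn i)) (by omega)
    refine ⟨w ++ [i], ?_, ?_, by simp [hlen]⟩
    · simp only [List.mem_append, List.mem_singleton]
      rintro x (hx | rfl)
      exacts [hw x hx, Finset.mem_Icc.mp hi]
    · simp [hwπ, mul_assoc, affS_mul_self hn]

lemma wordLength_eq_codeSum (hn : 2 ≤ n) (hp : IsAffine n π) : wordLength n π = codeSum n π := by
  obtain ⟨w, hw, hwπ, hlen⟩ := exists_word_length_eq_codeSum hn hp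
  refine le_antisymm (hlen ▸ Nat.sInf_le ⟨w, hw, hwπ, rfl⟩) (le_csInf ⟨_, w, hw, hwπ, rfl⟩ ?_)
  rintro _ ⟨v, hv, rfl, rfl⟩
  exact codeSum_prod_map_affS_le hn hv

lemma wordLength_one : wordLength n 1 = 0 :=
  Nat.le_zero.mp (Nat.sInf_le ⟨[], by simp, rfl, rfl⟩)

lemma wordLength_mul_affS_of_lt (hn : 2 ≤ n) (hp : IsAffine n π)
    (hi : i ∈ Finset.Icc (1 : ℤ) n) (hlt : π i < π (i + 1)) :
    wordLength n (π * affS n i) = wordLength n π + 1 := by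
  rw [wordLength_eq_codeSum hn hp,
    wordLength_eq_codeSum hn (hp.mul (by omega) (affS_isAffine hn i)),
    codeSum_mul_affS_of_lt hn hp hi hlt]

lemma wordLength_mul_affS_of_gt (hn : 2 ≤ n) (hp : IsAffine n π)
    (hi : i ∈ Finset.Icc (1 : ℤ) n) (hgt : π (i + 1) < π i) :
    wordLength n (π * affS n i) + 1 = wordLength n π := by
  rw [wordLength_eq_codeSum hn hp,
    wordLength_eq_codeSum hn (hp.mul (by omega) (affS_isAffine hn i)),
    codeSum_mul_affS_of_gt hn hp hi hgt]

lemma wordLength_affS (hn : 2 ≤ n) (hi : i ∈ Finset.Icc (1 : ℤ) n) :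
    wordLength n (affS n i) = 1 := by
  simpa [wordLength_one] using wordLength_mul_affS_of_lt hn IsAffine.one hi (by simp)

lemma wordLength_inv_le (hn : 2 ≤ n) (hp : IsAffine n π) : wordLength n π⁻¹ ≤ wordLength n π := by
  obtain ⟨w, hw, hwπ, hlen⟩ := exists_word_length_eq_codeSum hn hp
  rw [wordLength_eq_codeSum hn hp, ← hlen, ← w.length_reverse]
  refine Nat.sInf_le ⟨w.reverse, by simpa using hw, ?_, rfl⟩
  simp [← hwπ, List.prod_inv_reverse, List.map_reverse, Function.comp_def, affS_inv hn]

lemma wordLength_inv (hn : 2 ≤ n) (hp : IsAffine n π) : wordLength n π⁻¹ = wordLength n π :=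
  le_antisymm (wordLength_inv_le hn hp) (by
    simpa using wordLength_inv_le hn (hp.inv (by omega)))

end WordLength

section OrbitCount

variable {α : Type*}

noncomputable def orbitCount (f : α → α) : ℕ := Nat.card (Quot fun a b => f a = b)

lemma orbitCount_le [Finite α] (f : α → α) : orbitCount f ≤ Nat.card α :=
  Nat.card_le_card_of_surjective _ Quot.mk_surjective

lemma orbitCount_id : orbitCount (id : α → α) = Nat.card α :=
  Nat.card_congr ⟨Quot.lift id fun _ _ h => h, Quot.mk _, by rintro ⟨x⟩; rfl, fun _ => rfl⟩

lemma orbitCount_conj (f : α → α) (c : Perm α) : orbitCount (c ∘ f ∘ c.symm) = orbitCount f :=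
  (Nat.card_congr (Quot.congr c fun a b => by simp)).symm

lemma eq_of_orbit_mk_eq_fixed {f : α → α} (hf : Function.Injective f) {v : α} (hv : f v = v)
    {b : α} (h : Quot.mk (fun a b => f a = b) b = Quot.mk _ v) : b = v := by
  have hinv : ∀ x y, f x = y → (x = v) = (y = v) := by
    rintro x _ rfl
    exact propext ⟨fun h => h ▸ hv, fun h => hf (h.trans hv.symm)⟩
  simpa using congrArg (Quot.lift (· = v) hinv) h

lemma orbitCount_comp_swap [Finite α] [DecidableEq α] {f : α → α} (hf : Function.Injective f)
    {u v : α} (huv : u ≠ v) (hu : f u = u) (hv : f v = v) :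
    orbitCount (f ∘ swap u v) + 1 = orbitCount f := by
  let rf : α → α → Prop := fun a b => f a = b
  let rg : α → α → Prop := fun a b => f (swap u v a) = b
  -- `g = f ∘ swap u v` glues the fixed points `u` and `v` into one orbit and agrees with `f`
  -- elsewhere, so its orbits are those of `f` with the class of `v` folded into that of `u`.
  let φ : α → Quot rf := fun x => Quot.mk rf (if x = v then u else x)
  have hφ : ∀ x y, rg x y → φ x = φ y := by
    rintro x _ rfl
    by_cases hxv : x = v
    · simp [φ, hxv, hu, huv]
    by_cases hxu : x = u
    · simp [φ, hxu, hv]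
    have hfx : f x ≠ v := fun h => hxv (hf (h.trans hv.symm))
    simp only [φ, swap_apply_of_ne_of_ne hxu hxv, hxv, hfx, if_false]
    exact Quot.sound rfl
  have hψ : ∀ x y, rf x y → Quot.mk rg x = Quot.mk rg y := by
    rintro x _ rfl
    by_cases hxu : x = u
    · rw [hxu, hu]
    by_cases hxv : x = v
    · rw [hxv, hv]
    exact Quot.sound (show f (swap u v x) = f x by rw [swap_apply_of_ne_of_ne hxu hxv])
  have hφ_ne : ∀ x, φ x ≠ Quot.mk rf v := fun x h => by
    have := eq_of_orbit_mk_eq_fixed hf hv h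
    split_ifs at this with hxv
    exacts [huv this, hxv this]
  have e : Quot rg ≃ {q : Quot rf // q ≠ Quot.mk rf v} :=
    { toFun := fun q => ⟨Quot.lift φ hφ q, by rcases q with ⟨x⟩; exact hφ_ne x⟩
      invFun := fun q => Quot.lift (Quot.mk rg) hψ q.1
      left_inv := by
        rintro ⟨x⟩
        by_cases hxv : x = v
        · simp only [φ, hxv, if_true]
          exact Quot.sound (show f (swap u v u) = v by rw [swap_apply_left, hv])
        · simp [φ, hxv]
      right_inv := by
        rintro ⟨⟨b⟩, hb⟩
        have hbv : b ≠ v := fun h => hb (h ▸ rfl)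
        simp [φ, hbv] }
  have : Finite (Quot rf) := Finite.of_surjective _ Quot.mk_surjective
  change Nat.card (Quot rg) + 1 = Nat.card (Quot rf)
  classical
  rw [Nat.card_congr e, ← Finite.card_option, Nat.card_congr (optionSubtypeNe _)]

end OrbitCount

section Residues

variable {n : ℕ}

def residueMap (n : ℕ) (z : Perm ℤ) (a : ZMod n) : ZMod n := ((z a.val : ℤ) : ZMod n)

lemma lprime_eq_sub_orbitCount (z : Perm ℤ) : lprime n z = n - orbitCount (residueMap n z) :=
  rfl

lemma residueMap_ext {f g : ZMod n → ZMod n} (h : ∀ x : ℤ, f x = g x) : f = g :=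
  funext fun a => by
    obtain ⟨x, rfl⟩ := ZMod.intCast_surjective a
    exact h x

variable [NeZero n] {a b z : Perm ℤ}

lemma ShiftEquivariant.residueMap_intCast (hz : ShiftEquivariant n z) (x : ℤ) :
    residueMap n z x = z x := by
  rw [residueMap, ZMod.intCast_eq_intCast_iff_dvd_sub]
  apply hz.dvd_apply_sub_apply
  rw [← ZMod.intCast_eq_intCast_iff_dvd_sub, Int.cast_natCast, ZMod.natCast_zmod_val]

lemma ShiftEquivariant.residueMap_mul (ha : ShiftEquivariant n a) (hb : ShiftEquivariant n b) :
    residueMap n (a * b) = residueMap n a ∘ residueMap n b :=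
  residueMap_ext fun x => by
    simp [(ha.mul hb).residueMap_intCast, ha.residueMap_intCast, hb.residueMap_intCast]

lemma residueMap_one : residueMap n 1 = id :=
  funext fun a => by simp [residueMap]

lemma ShiftEquivariant.residueMap_injective (hz : ShiftEquivariant n z) :
    Function.Injective (residueMap n z) := by
  refine Function.LeftInverse.injective (g := residueMap n z⁻¹) fun x => ?_
  rw [← Function.comp_apply (f := residueMap n z⁻¹), ← hz.inv.residueMap_mul hz, inv_mul_cancel,
    residueMap_one, id]

lemma residueMap_affS (hn : 2 ≤ n) (i : ℤ) :
    residueMap n (affS n i) = swap (i : ZMod n) (i + 1) := by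
  refine residueMap_ext fun x => ?_
  rw [(affS_shiftEquivariant hn i).residueMap_intCast, affS_apply hn]
  have hcast : ∀ {y c : ℤ}, (n : ℤ) ∣ y - c → (y : ZMod n) = c := fun h =>
    ((ZMod.intCast_eq_intCast_iff_dvd_sub _ _ _).mpr h).symm
  split_ifs with h₁ h₂
  · simp [hcast h₁]
  · rw [Int.cast_sub, hcast h₂]
    simp
  · refine (swap_apply_of_ne_of_ne (fun h => h₁ ?_) (fun h => h₂ ?_)).symm
    · rwa [← ZMod.intCast_zmod_eq_zero_iff_dvd, Int.cast_sub, sub_eq_zero]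
    · rwa [← ZMod.intCast_zmod_eq_zero_iff_dvd, Int.cast_sub, sub_eq_zero, Int.cast_add,
        Int.cast_one]

end Residues

section OrbitLength

variable {n : ℕ} {y z : Perm ℤ} {i : ℤ}

lemma lprime_one (hn : 0 < n) : lprime n 1 = 0 := by
  have : NeZero n := ⟨hn.ne'⟩
  rw [lprime_eq_sub_orbitCount, residueMap_one, orbitCount_id, Nat.card_zmod, Nat.sub_self]

lemma lprime_affS_mul_mul_affS (hn : 2 ≤ n) (hz : ShiftEquivariant n z) (i : ℤ) :
    lprime n (affS n i * z * affS n i) = lprime n z := by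
  have : NeZero n := ⟨by omega⟩
  have hs := affS_shiftEquivariant hn i
  rw [lprime_eq_sub_orbitCount, lprime_eq_sub_orbitCount, (hs.mul hz).residueMap_mul hs,
    hs.residueMap_mul hz, residueMap_affS hn, ← orbitCount_conj (residueMap n z) (swap _ _)]
  rfl

lemma lprime_mul_affS (hn : 2 ≤ n) (hy : ShiftEquivariant n y) (h₁ : (n : ℤ) ∣ y i - i)
    (h₂ : y (i + 1) = y i + 1) : lprime n (y * affS n i) = lprime n y + 1 := by
  have : NeZero n := ⟨by omega⟩
  have : Fact (1 < n) := ⟨by omega⟩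
  have hfix : residueMap n y i = i := by
    rw [hy.residueMap_intCast, ZMod.intCast_eq_intCast_iff_dvd_sub]
    simpa using h₁.neg_right
  have hfix' : residueMap n y (i + 1) = i + 1 := by
    have := hy.residueMap_intCast (i + 1)
    push_cast [h₂] at this
    rw [this, ← hfix, hy.residueMap_intCast]
  have hmerge := orbitCount_comp_swap hy.residueMap_injective (by simp)
    hfix hfix'
  have hle := orbitCount_le (residueMap n y)
  rw [Nat.card_zmod] at hle
  rw [lprime_eq_sub_orbitCount, lprime_eq_sub_orbitCount, hy.residueMap_mul
    (affS_shiftEquivariant hn i), residueMap_affS hn]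
  omega

end OrbitLength

section Commute

variable {n : ℕ} {y : Perm ℤ} {i : ℤ}

lemma mul_affS_eq_affS_mul (hn : 2 ≤ n) (hy : ShiftEquivariant n y) (h₁ : (n : ℤ) ∣ y i - i)
    (h₂ : y (i + 1) = y i + 1) : y * affS n i = affS n i * y := by
  have hstep : ∀ k, (n : ℤ) ∣ k - i → y (k + 1) = y k + 1 := fun k hk => by
    have := hy.apply_sub_self_eq (x := k + 1) (y := i + 1) (by simpa using hk)
    have := hy.apply_sub_self_eq hk
    linarith
  have hres₁ : ∀ k, (n : ℤ) ∣ y k - i ↔ (n : ℤ) ∣ k - i := fun k => by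
    rw [← hy.dvd_apply_sub_apply_iff (x := k) (y := i),
      show y k - i = y k - y i + (y i - i) by ring, dvd_add_left h₁]
  have hres₂ : ∀ k, (n : ℤ) ∣ y k - (i + 1) ↔ (n : ℤ) ∣ k - (i + 1) := fun k => by
    rw [← hy.dvd_apply_sub_apply_iff (x := k) (y := i + 1), h₂,
      show y k - (i + 1) = y k - (y i + 1) + (y i - i) by ring, dvd_add_left h₁]
  ext k
  simp only [Perm.mul_apply, affS_apply hn, hres₁, hres₂]
  split_ifs with hk₁ hk₂
  · exact hstep k hk₁
  · have := hstep (k - 1) (by rwa [sub_sub, add_comm 1 i])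
    rw [sub_add_cancel] at this
    linarith
  · rfl

lemma dvd_and_apply_succ_of_commute (hn : 2 ≤ n) (hc : y * affS n i = affS n i * y)
    (hlt : y i < y (i + 1)) : (n : ℤ) ∣ y i - i ∧ y (i + 1) = y i + 1 := by
  have h : y (i + 1) = affS n i (y i) := by
    simpa [affS_apply_self hn] using congrArg (· i) hc
  have hmem := affS_apply_mem hn i (y i)
  rw [Finset.mem_Icc] at hmem
  have hsucc : affS n i (y i) = y i + 1 := by
    have := apply_ne_apply_add_one y i
    omega
  exact ⟨dvd_of_affS_apply_eq_add_one hn hsucc, h.trans hsucc⟩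

lemma affS_apply_lt_affS_apply (hn : 2 ≤ n) (hy : ShiftEquivariant n y) (hlt : y i < y (i + 1))
    (hc : y * affS n i ≠ affS n i * y) : affS n i (y i) < affS n i (y (i + 1)) := by
  have h₁ := affS_apply_mem hn i (y i)
  have h₂ := affS_apply_mem hn i (y (i + 1))
  have hne : affS n i (y i) ≠ affS n i (y (i + 1)) := fun h =>
    apply_ne_apply_add_one y i ((affS n i).injective h)
  rw [Finset.mem_Icc] at h₁ h₂
  by_contra hge
  -- `s` can only reverse the pair `y i < y (i + 1)` if they are adjacent and swapped by `s`
  have hadj : y (i + 1) = y i + 1 := by omega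
  have hs : affS n i (y i) = y i + 1 := by omega
  exact hc (mul_affS_eq_affS_mul hn hy (dvd_of_affS_apply_eq_add_one hn hs) hadj)

end Commute

lemma wordLength_affS_mul {n : ℕ} (hn : 2 ≤ n) {a : Perm ℤ} (ha : IsAffine n a) (i : ℤ) :
    wordLength n (affS n i * a) = wordLength n (a⁻¹ * affS n i) := by
  rw [← wordLength_inv hn ((affS_isAffine hn i).mul (by omega) ha), mul_inv_rev, affS_inv hn]

lemma wordLength_affS_mul_mul_affS {n : ℕ} (hn : 2 ≤ n) {y : Perm ℤ} (hy : IsAffine n y)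
    (hyi : y⁻¹ = y) {i : ℤ} (hi : i ∈ Finset.Icc (1 : ℤ) n) (hlt : y i < y (i + 1))
    (hc : y * affS n i ≠ affS n i * y) :
    wordLength n (affS n i * y * affS n i) = wordLength n (y * affS n i) + 1 := by
  have hsy := (affS_isAffine hn i).mul (by omega) hy
  rw [wordLength_mul_affS_of_lt hn hsy hi (affS_apply_lt_affS_apply hn hy.shiftEquivariant hlt hc),
    ← wordLength_inv hn hsy, mul_inv_rev, affS_inv hn, hyi]

namespace IsDemazure

variable {n : ℕ} {D : Perm ℤ → Perm ℤ → Perm ℤ} {a π y z : Perm ℤ} {i : ℤ}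

lemma one_one (hD : IsDemazure n D) : D 1 1 = 1 := by
  simpa using hD.2.2.2 1 1 IsAffine.one IsAffine.one (by simp [wordLength_one])

lemma eq_mul_affS (hn : 2 ≤ n) (hD : IsDemazure n D) (ha : IsAffine n a)
    (hi : i ∈ Finset.Icc (1 : ℤ) n) (h : wordLength n (a * affS n i) = wordLength n a + 1) :
    D a (affS n i) = a * affS n i :=
  hD.2.2.2 a _ ha (affS_isAffine hn i) (by rw [h, wordLength_affS hn hi])

lemma eq_affS_mul (hn : 2 ≤ n) (hD : IsDemazure n D) (ha : IsAffine n a)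
    (hi : i ∈ Finset.Icc (1 : ℤ) n) (h : wordLength n (affS n i * a) = wordLength n a + 1) :
    D (affS n i) a = affS n i * a :=
  hD.2.2.2 _ a (affS_isAffine hn i) ha (by rw [h, wordLength_affS hn hi, add_comm])

lemma mul_affS_affS_eq (hn : 2 ≤ n) (hD : IsDemazure n D) (ha : IsAffine n a)
    (hi : i ∈ Finset.Icc (1 : ℤ) n) (h : wordLength n (a * affS n i) + 1 = wordLength n a) :
    D (a * affS n i) (affS n i) = a := by
  simpa [hn] using hD.eq_mul_affS hn (ha.mul (by omega) (affS_isAffine hn i)) hi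
    (by simpa [hn] using h.symm)

lemma affS_affS_mul_eq (hn : 2 ≤ n) (hD : IsDemazure n D) (ha : IsAffine n a)
    (hi : i ∈ Finset.Icc (1 : ℤ) n) (h : wordLength n (affS n i * a) + 1 = wordLength n a) :
    D (affS n i) (affS n i * a) = a := by
  simpa [hn] using hD.eq_affS_mul hn ((affS_isAffine hn i).mul (by omega) ha) hi
    (by simpa [hn] using h.symm)

lemma eq_left (hn : 2 ≤ n) (hD : IsDemazure n D) (ha : IsAffine n a)
    (hi : i ∈ Finset.Icc (1 : ℤ) n) (h : wordLength n (a * affS n i) + 1 = wordLength n a) :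
    D a (affS n i) = a := by
  have hs := affS_isAffine hn i
  have hback := hD.mul_affS_affS_eq hn ha hi h
  -- `a ∘ s = (as ∘ s) ∘ s = as ∘ (s ∘ s) = as ∘ s = a`
  rw [← hback, hD.2.1 _ _ _ (ha.mul (by omega) hs) hs hs, hD.2.2.1]

lemma eq_right (hn : 2 ≤ n) (hD : IsDemazure n D) (ha : IsAffine n a)
    (hi : i ∈ Finset.Icc (1 : ℤ) n) (h : wordLength n (affS n i * a) + 1 = wordLength n a) :
    D (affS n i) a = a := by
  have hs := affS_isAffine hn i
  have hback := hD.affS_affS_mul_eq hn ha hi h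
  rw [← hback, ← hD.2.1 _ _ _ hs hs (hs.mul (by omega) ha), hD.2.2.1]

lemma apply_succ_lt_apply (hn : 2 ≤ n) (hD : IsDemazure n D) (ha : IsAffine n a)
    (hi : i ∈ Finset.Icc (1 : ℤ) n) : D a (affS n i) (i + 1) < D a (affS n i) i := by
  rcases lt_or_gt_of_ne (apply_ne_apply_add_one a i) with hlt | hgt
  · rw [hD.eq_mul_affS hn ha hi (wordLength_mul_affS_of_lt hn ha hi hlt)]
    simpa [affS_apply_self hn, affS_apply_succ hn] using hlt
  · rwa [hD.eq_left hn ha hi (wordLength_mul_affS_of_gt hn ha hi hgt)]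

lemma inv_mul_eq_conj_affS (hn : 2 ≤ n) (hD : IsDemazure n D) (hπ : IsAffine n π)
    (hi : i ∈ Finset.Icc (1 : ℤ) n) (h : wordLength n (π * affS n i) + 1 = wordLength n π) :
    D π⁻¹ π = D (affS n i) (D (D (π * affS n i)⁻¹ (π * affS n i)) (affS n i)) := by
  set σ := π * affS n i
  have hs := affS_isAffine hn i
  have hσ : IsAffine n σ := hπ.mul (by omega) hs
  have hσ' : IsAffine n σ⁻¹ := hσ.inv (by omega)
  have hσπ : D σ (affS n i) = π := hD.mul_affS_affS_eq hn hπ hi h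
  have hσπ' : D (affS n i) σ⁻¹ = π⁻¹ := by
    have hinv : σ⁻¹ = affS n i * π⁻¹ := by rw [mul_inv_rev, affS_inv hn]
    rw [hinv, hD.affS_affS_mul_eq hn (hπ.inv (by omega)) hi]
    rw [← hinv, wordLength_inv hn hσ, wordLength_inv hn hπ, h]
  calc D π⁻¹ π = D (D (affS n i) σ⁻¹) (D σ (affS n i)) := by rw [hσπ, hσπ']
    _ = D (affS n i) (D σ⁻¹ (D σ (affS n i))) := hD.2.1 _ _ _ hs hσ' (hD.1 _ _ hσ hs)
    _ = D (affS n i) (D (D σ⁻¹ σ) (affS n i)) := by rw [hD.2.1 _ _ _ hσ' hσ hs]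

lemma lt_apply_succ_of_inv_mul (hn : 2 ≤ n) (hD : IsDemazure n D) (hπ : IsAffine n π)
    (hi : i ∈ Finset.Icc (1 : ℤ) n) (h : D π⁻¹ π i < D π⁻¹ π (i + 1)) : π i < π (i + 1) := by
  refine (lt_or_gt_of_ne (apply_ne_apply_add_one π i)).resolve_right fun hgt => ?_
  have hs := affS_isAffine hn i
  have hπs := hπ.mul (by omega) hs
  have hback := hD.mul_affS_affS_eq hn hπ hi (wordLength_mul_affS_of_gt hn hπ hi hgt)
  have hdesc : D π⁻¹ π = D (D π⁻¹ (π * affS n i)) (affS n i) := by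
    rw [hD.2.1 _ _ _ (hπ.inv (by omega)) hπs hs, hback]
  rw [hdesc] at h
  exact (hD.apply_succ_lt_apply hn (hD.1 _ _ (hπ.inv (by omega)) hπs) hi).not_gt h

lemma conj_affS_of_gt (hn : 2 ≤ n) (hD : IsDemazure n D) (hy : IsAffine n y) (hyi : y⁻¹ = y)
    (hi : i ∈ Finset.Icc (1 : ℤ) n) (hgt : y (i + 1) < y i) :
    D (affS n i) (D y (affS n i)) = y := by
  have h := wordLength_mul_affS_of_gt hn hy hi hgt
  rw [hD.eq_left hn hy hi h, hD.eq_right hn hy hi (by rwa [wordLength_affS_mul hn hy, hyi])]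

lemma conj_affS_of_commute (hn : 2 ≤ n) (hD : IsDemazure n D) (hy : IsAffine n y)
    (hi : i ∈ Finset.Icc (1 : ℤ) n) (hlt : y i < y (i + 1)) (hc : y * affS n i = affS n i * y) :
    D (affS n i) (D y (affS n i)) = y * affS n i := by
  have h := wordLength_mul_affS_of_lt hn hy hi hlt
  rw [hD.eq_mul_affS hn hy hi h, hD.eq_right hn (hy.mul (by omega) (affS_isAffine hn i)) hi]
  rw [hc, affS_mul_affS_mul hn, ← hc, h]

lemma conj_affS_of_not_commute (hn : 2 ≤ n) (hD : IsDemazure n D) (hy : IsAffine n y)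
    (hyi : y⁻¹ = y) (hi : i ∈ Finset.Icc (1 : ℤ) n) (hlt : y i < y (i + 1))
    (hc : y * affS n i ≠ affS n i * y) :
    D (affS n i) (D y (affS n i)) = affS n i * y * affS n i := by
  rw [hD.eq_mul_affS hn hy hi (wordLength_mul_affS_of_lt hn hy hi hlt), mul_assoc,
    hD.eq_affS_mul hn (hy.mul (by omega) (affS_isAffine hn i)) hi]
  rw [← mul_assoc, wordLength_affS_mul_mul_affS hn hy hyi hi hlt hc]

lemma conj_affS_involution_le (hn : 2 ≤ n) (hD : IsDemazure n D) (hy : IsAffine n y) (hyi : y⁻¹ = y)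
    (hi : i ∈ Finset.Icc (1 : ℤ) n) :
    IsAffine n (D (affS n i) (D y (affS n i))) ∧
      (D (affS n i) (D y (affS n i)))⁻¹ = D (affS n i) (D y (affS n i)) ∧
      wordLength n (D (affS n i) (D y (affS n i))) + lprime n (D (affS n i) (D y (affS n i))) ≤
        wordLength n y + lprime n y + 2 := by
  have hs := affS_isAffine hn i
  rcases lt_or_gt_of_ne (apply_ne_apply_add_one y i) with hlt | hgt
  · by_cases hc : y * affS n i = affS n i * y
    · obtain ⟨h₁, h₂⟩ := dvd_and_apply_succ_of_commute hn hc hlt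
      rw [hD.conj_affS_of_commute hn hy hi hlt hc, wordLength_mul_affS_of_lt hn hy hi hlt,
        lprime_mul_affS hn hy.shiftEquivariant h₁ h₂]
      exact ⟨hy.mul (by omega) hs, by rw [mul_inv_rev, affS_inv hn, hyi, hc], by omega⟩
    · rw [hD.conj_affS_of_not_commute hn hy hyi hi hlt hc,
        wordLength_affS_mul_mul_affS hn hy hyi hi hlt hc, wordLength_mul_affS_of_lt hn hy hi hlt,
        lprime_affS_mul_mul_affS hn hy.shiftEquivariant]
      exact ⟨(hs.mul (by omega) hy).mul (by omega) hs,
        by rw [mul_inv_rev, mul_inv_rev, affS_inv hn, hyi, mul_assoc], by omega⟩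
  · rw [hD.conj_affS_of_gt hn hy hyi hi hgt]
    exact ⟨hy, hyi, by omega⟩

lemma inv_mul_involution_le (hn : 2 ≤ n) (hD : IsDemazure n D) (hπ : IsAffine n π) :
    IsAffine n (D π⁻¹ π) ∧ (D π⁻¹ π)⁻¹ = D π⁻¹ π ∧
      wordLength n (D π⁻¹ π) + lprime n (D π⁻¹ π) ≤ 2 * wordLength n π := by
  induction h : wordLength n π using Nat.strong_induction_on generalizing π with
  | _ N ih =>
    rcases eq_or_ne π 1 with rfl | hne
    · simp [hD.one_one, IsAffine.one, wordLength_one, lprime_one (show 0 < n by omega)]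
    obtain ⟨i, hi, hgt⟩ := exists_apply_succ_lt_of_ne_one (by omega) hπ hne
    have hdesc := wordLength_mul_affS_of_gt hn hπ hi hgt
    obtain ⟨hy, hyi, hyl⟩ := ih _ (by omega) (hπ.mul (by omega) (affS_isAffine hn i)) rfl
    rw [hD.inv_mul_eq_conj_affS hn hπ hi hdesc]
    obtain ⟨hz, hzi, hzl⟩ := hD.conj_affS_involution_le hn hy hyi hi
    exact ⟨hz, hzi, by omega⟩

lemma exists_conj_affS_eq (hn : 2 ≤ n) (hD : IsDemazure n D) (hz : IsAffine n z)
    (hzi : z⁻¹ = z) (hi : i ∈ Finset.Icc (1 : ℤ) n) (hgt : z (i + 1) < z i) :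
    ∃ y, IsAffine n y ∧ y⁻¹ = y ∧ y i < y (i + 1) ∧ D (affS n i) (D y (affS n i)) = z ∧
      wordLength n y < wordLength n z ∧
      wordLength n z + lprime n z = wordLength n y + lprime n y + 2 := by
  have hs := affS_isAffine hn i
  have hzs := hz.mul (by omega) hs
  have hzs_lt : (z * affS n i) i < (z * affS n i) (i + 1) := by
    simpa [affS_apply_self hn, affS_apply_succ hn] using hgt
  by_cases hc : z * affS n i = affS n i * z
  · have hyc : z * affS n i * affS n i = affS n i * (z * affS n i) := by
      rw [← mul_assoc, ← hc]
    obtain ⟨h₁, h₂⟩ := dvd_and_apply_succ_of_commute hn hyc hzs_lt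
    have hlen := wordLength_mul_affS_of_lt hn hzs hi hzs_lt
    have hlp := lprime_mul_affS hn hzs.shiftEquivariant h₁ h₂
    rw [mul_affS_mul_affS hn] at hlen hlp
    refine ⟨z * affS n i, hzs, by rw [mul_inv_rev, affS_inv hn, hzi, hc], hzs_lt, ?_, by omega,
      by omega⟩
    rw [hD.conj_affS_of_commute hn hzs hi hzs_lt hyc, mul_affS_mul_affS hn]
  · have hzc : z ≠ affS n i * z * affS n i := fun h => hc <|
      calc z * affS n i = affS n i * z * affS n i * affS n i := by rw [← h]
        _ = affS n i * z := mul_affS_mul_affS hn _ _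
    set y := affS n i * z * affS n i
    have hy : IsAffine n y := (hs.mul (by omega) hz).mul (by omega) hs
    have hyi : y⁻¹ = y := by simp only [y, mul_inv_rev, affS_inv hn, hzi, mul_assoc]
    have hzy : affS n i * y * affS n i = z := by simp [y, mul_assoc, hn]
    have hlt : y i < y (i + 1) := by
      simpa [y, affS_apply_self hn, affS_apply_succ hn] using affS_apply_lt_affS_apply hn
        hzs.shiftEquivariant hzs_lt (by simpa [y, mul_assoc, hn] using hzc)
    have hyc : y * affS n i ≠ affS n i * y := fun h => hzc <|
      calc z = affS n i * y * affS n i := hzy.symm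
        _ = y := by rw [mul_assoc, h, affS_mul_affS_mul hn]
    have hlen := wordLength_affS_mul_mul_affS hn hy hyi hi hlt hyc
    rw [hzy, wordLength_mul_affS_of_lt hn hy hi hlt] at hlen
    have hlp := lprime_affS_mul_mul_affS hn hy.shiftEquivariant i
    rw [hzy] at hlp
    exact ⟨y, hy, hyi, hlt, by rw [hD.conj_affS_of_not_commute hn hy hyi hi hlt hyc, hzy],
      by omega, by omega⟩

lemma exists_inv_mul_eq (hn : 2 ≤ n) (hD : IsDemazure n D) (hz : IsAffine n z) (hzi : z⁻¹ = z) :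
    ∃ π, IsAffine n π ∧ D π⁻¹ π = z ∧ 2 * wordLength n π = wordLength n z + lprime n z := by
  induction h : wordLength n z using Nat.strong_induction_on generalizing z with
  | _ N ih =>
    rcases eq_or_ne z 1 with rfl | hne
    · exact ⟨1, IsAffine.one, by rw [inv_one, hD.one_one],
        by simp [← h, wordLength_one, lprime_one (show 0 < n by omega)]⟩
    obtain ⟨i, hi, hgt⟩ := exists_apply_succ_lt_of_ne_one (by omega) hz hne
    obtain ⟨y, hy, hyi, hlt, hyz, hyl, hyl'⟩ := hD.exists_conj_affS_eq hn hz hzi hi hgt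
    obtain ⟨π, hπ, hπy, hπl⟩ := ih _ (h ▸ hyl) hy hyi rfl
    have hπs := wordLength_mul_affS_of_lt hn hπ hi
      (hD.lt_apply_succ_of_inv_mul hn hπ hi (hπy ▸ hlt))
    refine ⟨π * affS n i, hπ.mul (by omega) (affS_isAffine hn i), ?_, by omega⟩
    rw [hD.inv_mul_eq_conj_affS hn (hπ.mul (by omega) (affS_isAffine hn i)) hi
      (by rw [mul_affS_mul_affS hn, hπs]), mul_affS_mul_affS hn, hπy, hyz]

end IsDemazure

lemma eq_one_of_isAffine_one {π : Perm ℤ} (hπ : IsAffine 1 π) : π = 1 := by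
  have h₁ : π 1 = 1 := by simpa using hπ.2
  ext k
  simpa [h₁] using hπ.shiftEquivariant.apply_add_mul (k - 1) 1

/-- `ℓ̂(z) = (ℓ(z) + ℓ'(z))/2` is a nonnegative integer (i.e. the sum
is even) and equals `ℓ(π)` for every minimal-length Hecke atom `π` of `z`. -/
theorem half_length_atoms (n : ℕ) (hn : 0 < n)
    (D : Equiv.Perm ℤ → Equiv.Perm ℤ → Equiv.Perm ℤ) (hD : IsDemazure n D)
    (z : Equiv.Perm ℤ) (hz : IsAffine n z) (hzi : z⁻¹ = z) :
    2 ∣ (wordLength n z + lprime n z) ∧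
    ∀ π ∈ DemAtoms n D z, 2 * wordLength n π = wordLength n z + lprime n z := by
  obtain rfl | hn := (show n = 1 ∨ 2 ≤ n by omega)
  · obtain rfl := eq_one_of_isAffine_one hz
    refine ⟨by simp [wordLength_one, lprime_one], fun π hπ => ?_⟩
    simp [eq_one_of_isAffine_one hπ.1.1, wordLength_one, lprime_one]
  obtain ⟨π₀, hπ₀, hπ₀z, hπ₀l⟩ := hD.exists_inv_mul_eq hn hz hzi
  refine ⟨⟨wordLength n π₀, by omega⟩, fun π ⟨⟨hπ, hπz⟩, hmin⟩ => ?_⟩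
  have hle := (hD.inv_mul_involution_le hn hπ).2.2
  rw [hπz] at hle
  have := hmin π₀ ⟨hπ₀, hπ₀z⟩
  omega
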